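/- If C is a class of morphisms in a cocomplete category K containing all isomorphisms and closed under pushout and transfinite composition, then the class of retracts of morphisms of C is closed under composition: if f₀: A₀ → A₁ and f₁: A₁ → A₂ are both retracts of morphisms in C, then f₁ ∘ f₀ is a retract of a morphism in C. -/

import Mathlib

/-!
A retract `f : A ⟶ B` of `g : X ⟶ Y` in `C`, with retraction `r : X ⟶ A`, is already a retract
under `A` of the pushout of `g` along `r`, which lies in `C`. So write `f₀` and `f₁` as retracts
under their domains of `g₀ : A₀ ⟶ X` and `g₁ : A₁ ⟶ Y` in `C`, and push `g₁` out along the section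
`A₁ ⟶ X`: the two retractions glue on the pushout, exhibiting `f₀ ≫ f₁` as a retract under `A₀`
of `g₀` followed by that pushout. This composite lies in `C` because a two-step chain is a
transfinite composition.
-/

open CategoryTheory Category Limits Opposite

universe w v u u' u''

namespace CellularPaper

variable {K : Type u} [Category.{v} K]

/-- The restriction of a chain `F : J ⥤ K` to the elements below `j`. -/
def restrictionLT {J : Type w} [Preorder J] (F : J ⥤ K) (j : J) :
    {i : J // i < j} ⥤ K :=
  (Monotone.functor (f := fun i : {i : J // i < j} => (i : J)) fun _ _ h => h) ⋙ F

/-- The cocone on the restriction of `F` below `j` with apex `F.obj j`. -/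
@[simps]
def coconeLT {J : Type w} [Preorder J] (F : J ⥤ K) (j : J) :
    Cocone (restrictionLT F j) where
  pt := F.obj j
  ι :=
    { app := fun i => F.map (homOfLE i.2.le)
      naturality := fun i i' h => by
        dsimp [restrictionLT, Monotone.functor]
        rw [← F.map_comp]
        simp }

/-- `f` is a transfinite composite of a smooth chain with links in `C`. -/
def IsTransfiniteCompositionOf (C : MorphismProperty K) : MorphismProperty K :=
  fun A B f =>
    ∃ (J : Type w) (_ : LinearOrder J) (_ : SuccOrder J) (_ : OrderBot J)
      (_ : WellFoundedLT J) (F : J ⥤ K) (c : Cocone F) (_ : IsColimit c)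
      (eA : A ≅ F.obj ⊥) (eB : c.pt ≅ B),
      (∀ j : J, ¬IsMax j → C (F.map (homOfLE (Order.le_succ j)))) ∧
      (∀ j : J, Order.IsSuccLimit j → Nonempty (IsColimit (coconeLT F j))) ∧
      eA.hom ≫ c.ι.app ⊥ ≫ eB.hom = f

/-- A cellular structure: a class of morphisms containing all isomorphisms and closed
under pushout and transfinite composition. -/
structure IsCellular (C : MorphismProperty K) : Prop where
  isos : ∀ {A B : K} (f : A ⟶ B), IsIso f → C f
  pushout : ∀ {A B A' B' : K} {f : A ⟶ B} {u : A ⟶ A'} {v : B ⟶ B'} {g : A' ⟶ B'},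
    IsPushout f u v g → C f → C g
  transfinite : ∀ {A B : K} (f : A ⟶ B), IsTransfiniteCompositionOf.{v} C f → C f

/-- `f` is a retract of `g` in the arrow category. -/
def IsRetractOf {A B X Y : K} (f : A ⟶ B) (g : X ⟶ Y) : Prop :=
  ∃ (u : A ⟶ X) (v : B ⟶ Y) (r : X ⟶ A) (s : Y ⟶ B),
    u ≫ g = f ≫ v ∧ r ≫ f = g ≫ s ∧ u ≫ r = 𝟙 A ∧ v ≫ s = 𝟙 B

/-- The class of retracts of morphisms in `C`. -/
def retracts (C : MorphismProperty K) : MorphismProperty K :=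
  fun _ _ f => ∃ (X Y : K) (g : X ⟶ Y), C g ∧ IsRetractOf f g

/-- The class of pushouts of morphisms in `C`. -/
def Po (C : MorphismProperty K) : MorphismProperty K :=
  fun A' B' g => ∃ (A B : K) (f : A ⟶ B) (u : A ⟶ A') (v : B ⟶ B'),
    C f ∧ IsPushout f u v g

/-- A κ-directed preorder. -/
def IsCardinalDirected (P : Type v) [Preorder P] (κ : Cardinal.{v}) : Prop :=
  ∀ S : Set P, Cardinal.mk S < κ → ∃ p : P, ∀ s ∈ S, s ≤ p

/-- A κ-presentable object: its hom-functor preserves κ-directed colimits. -/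
def IsCardinalPresentable (κ : Cardinal.{v}) (A : K) : Prop :=
  ∀ (P : Type v) (_ : Preorder P), IsCardinalDirected P κ →
    Nonempty (PreservesColimitsOfShape P (coyoneda.obj (op A)))

/-- A locally κ-presentable category. -/
structure IsLocallyPresentable (κ : Cardinal.{v}) (K : Type u) [Category.{v} K] : Prop where
  regular : κ.IsRegular
  hasColimits : HasColimits K
  generators : ∃ (ι : Type v) (G : ι → K), (∀ i, IsCardinalPresentable κ (G i)) ∧
    ∀ X : K, ∃ (P : Type v) (_ : Preorder P) (F : P ⥤ K) (c : Cocone F) (_ : IsColimit c),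
      IsCardinalDirected P κ ∧ Nonempty (c.pt ≅ X) ∧ ∀ p : P, ∃ i, Nonempty (F.obj p ≅ G i)

/-- A locally presentable category. -/
def LocallyPresentable (K : Type u) [Category.{v} K] : Prop :=
  ∃ κ : Cardinal.{v}, IsLocallyPresentable κ K

/-- The smallest cellular class containing `X`. -/
def cellClosure (X : MorphismProperty K) : MorphismProperty K :=
  fun _ _ f => ∀ C : MorphismProperty K, IsCellular C → X ≤ C → C f

/-- `cof(X)`: retracts of transfinite composites of pushouts of `X`. -/
def cofClosure (X : MorphismProperty K) : MorphismProperty K :=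
  retracts (IsTransfiniteCompositionOf.{v} (Po X))

/-- The morphism property generated by a family of morphisms. -/
def ofFamily {ι : Type*} {a b : ι → K} (s : ∀ i, a i ⟶ b i) : MorphismProperty K :=
  fun _ _ f => ∃ i, Nonempty (Arrow.mk f ≅ Arrow.mk (s i))

/-- `C` is cofibrantly generated by a set of morphisms. -/
def IsCofibrantlyGenerated (C : MorphismProperty K) : Prop :=
  ∃ (ι : Type v) (a b : ι → K) (s : ∀ i, a i ⟶ b i),
    C = cofClosure (ofFamily s)

/-- A combinatorial structure on a locally presentable category. -/
structure IsCombinatorial (K : Type u) [Category.{v} K] (C : MorphismProperty K) : Prop where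
  locallyPresentable : LocallyPresentable K
  cellular : IsCellular C
  retractClosed : retracts C ≤ C
  cofibrantlyGenerated : IsCofibrantlyGenerated C

/-- `f` is a transfinite composite of length `< κ` of morphisms in `C`. -/
def IsBoundedTransfiniteCompositionOf (κ : Cardinal.{v}) (C : MorphismProperty K) :
    MorphismProperty K :=
  fun A B f =>
    ∃ (J : Type v) (_ : LinearOrder J) (_ : SuccOrder J) (_ : OrderBot J)
      (_ : WellFoundedLT J), Cardinal.mk J < κ ∧
      ∃ (F : J ⥤ K) (c : Cocone F) (_ : IsColimit c)
        (eA : A ≅ F.obj ⊥) (eB : c.pt ≅ B),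
        (∀ j : J, ¬IsMax j → C (F.map (homOfLE (Order.le_succ j)))) ∧
        (∀ j : J, Order.IsSuccLimit j → Nonempty (IsColimit (coconeLT F j))) ∧
        eA.hom ≫ c.ι.app ⊥ ≫ eB.hom = f

/-- The morphisms of `C` with κ-presentable domain and codomain. -/
def betweenPresentable (κ : Cardinal.{v}) (C : MorphismProperty K) : MorphismProperty K :=
  fun A B f => C f ∧ IsCardinalPresentable κ A ∧ IsCardinalPresentable κ B

/-- `Po_κ(X)`: pushouts of morphisms of `X` between κ-presentable objects. -/
def PoCard (κ : Cardinal.{v}) (X : MorphismProperty K) : MorphismProperty K :=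
  betweenPresentable κ (Po X)

/-- The category `psh(K²)`: objects are morphisms of `K`, morphisms are pushout squares. -/
structure PshArrow (K : Type u) [Category.{v} K] : Type max u v where
  arr : Arrow K

instance : Category.{v} (PshArrow K) where
  Hom g f := {φ : g.arr ⟶ f.arr // IsPushout g.arr.hom φ.left φ.right f.arr.hom}
  id g := ⟨𝟙 _, IsPushout.of_vert_isIso ⟨by simp⟩⟩
  comp φ ψ := ⟨φ.1 ≫ ψ.1, φ.2.paste_vert ψ.2⟩
  id_comp φ := Subtype.ext (Category.id_comp _)
  comp_id φ := Subtype.ext (Category.comp_id _)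
  assoc _ _ _ := Subtype.ext (Category.assoc _ _ _)


section PsPull

variable {K : Type u} {L : Type u'} {M : Type u''}
variable [Category.{v} K] [Category.{v} L] [Category.{v} M]

/-- The pseudopullback of `F : K ⥤ M` and `G : L ⥤ M`. -/
structure PsPull (F : K ⥤ M) (G : L ⥤ M) : Type max u u' v where
  k : K
  l : L
  t : F.obj k ≅ G.obj l

variable {F : K ⥤ M} {G : L ⥤ M}

/-- Morphisms in the pseudopullback. -/
@[ext]
structure PsHom (a b : PsPull F G) : Type v where
  hk : a.k ⟶ b.k
  hl : a.l ⟶ b.l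
  w : F.map hk ≫ b.t.hom = a.t.hom ≫ G.map hl

instance : Category.{v} (PsPull F G) where
  Hom := PsHom
  id a := ⟨𝟙 _, 𝟙 _, by simp⟩
  comp f g := ⟨f.hk ≫ g.hk, f.hl ≫ g.hl, by
    rw [F.map_comp, G.map_comp, Category.assoc, g.w, ← Category.assoc, f.w,
      Category.assoc]⟩

/-- The first projection of the pseudopullback. -/
def projK (F : K ⥤ M) (G : L ⥤ M) : PsPull F G ⥤ K where
  obj a := a.k
  map f := f.hk

/-- The second projection of the pseudopullback. -/
def projL (F : K ⥤ M) (G : L ⥤ M) : PsPull F G ⥤ L where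
  obj a := a.l
  map f := f.hl

/-- `Ps(C, D)`: morphisms of the pseudopullback whose projections lie in `C` and `D`. -/
def PsClass (C : MorphismProperty K) (D : MorphismProperty L) :
    MorphismProperty (PsPull F G) :=
  fun _ _ f => C f.hk ∧ D f.hl

end PsPull

/-- Indexed by `ULift (Fin 3)`: `IsTransfiniteCompositionOf.{v}` wants the index in `Type v`. -/
def chain₂ {A B D : K} (f : A ⟶ B) (g : B ⟶ D) : ULift.{v} (Fin 3) ⥤ K :=
  (Monotone.functor (f := ULift.down) fun _ _ h => h) ⋙ ComposableArrows.mk₂ f g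

lemma chain₂_map_of_covBy {C : MorphismProperty K} {A B D : K} {f : A ⟶ B} {g : B ⟶ D}
    (hf : C f) (hg : C g) {i k : ULift.{v} (Fin 3)} (h : i ≤ k) (hik : i ⋖ k) :
    C ((chain₂ f g).map (homOfLE h)) := by
  obtain ⟨i⟩ := i
  obtain ⟨k⟩ := k
  fin_cases i <;> fin_cases k
  all_goals first
    | exact hf
    | exact hg
    | exact absurd hik.lt (by decide)
    | exact (hik.2 (c := ⟨1⟩) (by decide) (by decide)).elim

theorem isTransfiniteCompositionOf_comp {C : MorphismProperty K} {A B D : K}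
    {f : A ⟶ B} {g : B ⟶ D} (hf : C f) (hg : C g) :
    IsTransfiniteCompositionOf.{v} C (f ≫ g) := by
  let _ : SuccOrder (ULift.{v} (Fin 3)) := SuccOrder.ofLinearWellFoundedLT _
  refine ⟨ULift (Fin 3), inferInstance, inferInstance, inferInstance, inferInstance,
    chain₂ f g, _, colimitOfDiagramTerminal isTerminalTop _, Iso.refl _, Iso.refl _,
    fun j hj => chain₂_map_of_covBy hf hg _ (Order.covBy_succ_of_not_isMax hj),
    fun j hj => (Order.not_isSuccLimit_of_isSuccArchimedean hj).elim, ?_⟩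
  exact (id_comp _).trans (comp_id _)

theorem IsCellular.comp {C : MorphismProperty K} (hC : IsCellular C) {A B D : K}
    {f : A ⟶ B} {g : B ⟶ D} (hf : C f) (hg : C g) : C (f ≫ g) :=
  hC.transfinite _ (isTransfiniteCompositionOf_comp hf hg)

lemma _root_.CategoryTheory.Retract.right_retract {A : K} {X Y : Under A} (R : Retract X Y) :
    R.i.right ≫ R.r.right = 𝟙 X.right := by
  rw [← Under.comp_right, R.retract, Under.id_right]

noncomputable def retractUnderPushout {A B X Y : K} {f : A ⟶ B} {g : X ⟶ Y}
    {u : A ⟶ X} {v : B ⟶ Y} {r : X ⟶ A} {s : Y ⟶ B} [HasPushout g r]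
    (hu : u ≫ g = f ≫ v) (hr : r ≫ f = g ≫ s) (hur : u ≫ r = 𝟙 A) (hvs : v ≫ s = 𝟙 B) :
    Retract (Under.mk f) (Under.mk (pushout.inr g r)) where
  i := Under.homMk (v ≫ pushout.inl g r) (by
    change f ≫ v ≫ pushout.inl g r = pushout.inr g r
    rw [← reassoc_of% hu, pushout.condition, reassoc_of% hur])
  r := Under.homMk (pushout.desc s f hr.symm) (pushout.inr_desc _ _ _)
  retract := by
    ext
    change (v ≫ pushout.inl g r) ≫ pushout.desc s f _ = 𝟙 B
    rw [assoc, pushout.inl_desc, hvs]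

theorem IsCellular.exists_retract_under {C : MorphismProperty K} (hC : IsCellular C)
    [HasPushouts K] {A B X Y : K} {f : A ⟶ B} {g : X ⟶ Y} (hg : C g) (h : IsRetractOf f g) :
    ∃ (P : K) (g' : A ⟶ P), C g' ∧ Nonempty (Retract (Under.mk f) (Under.mk g')) := by
  obtain ⟨u, v, r, s, hu, hr, hur, hvs⟩ := h
  exact ⟨_, _, hC.pushout (IsPushout.of_hasPushout g r) hg,
    ⟨retractUnderPushout hu hr hur hvs⟩⟩

noncomputable def _root_.CategoryTheory.Retract.underComp {A₀ A₁ A₂ X Y : K}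
    {f₀ : A₀ ⟶ A₁} {f₁ : A₁ ⟶ A₂} {g₀ : A₀ ⟶ X} {g₁ : A₁ ⟶ Y}
    (R₀ : Retract (Under.mk f₀) (Under.mk g₀))
    (R₁ : Retract (Under.mk f₁) (Under.mk g₁)) [HasPushout g₁ R₀.i.right] :
    Retract (Under.mk (f₀ ≫ f₁)) (Under.mk (g₀ ≫ pushout.inr g₁ R₀.i.right)) where
  i := Under.homMk (R₁.i.right ≫ pushout.inl g₁ R₀.i.right) (by
    have h₀ : f₀ ≫ R₀.i.right = g₀ := Under.w R₀.i
    have h₁ : f₁ ≫ R₁.i.right = g₁ := Under.w R₁.i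
    simp only [Under.mk_hom, assoc, reassoc_of% h₁, pushout.condition, reassoc_of% h₀])
  r := Under.homMk (pushout.desc R₁.r.right (R₀.r.right ≫ f₁) (by
    have h₁ : g₁ ≫ R₁.r.right = f₁ := Under.w R₁.r
    rw [h₁, reassoc_of% R₀.right_retract])) (by
    have h₀ : g₀ ≫ R₀.r.right = f₀ := Under.w R₀.r
    change (g₀ ≫ pushout.inr g₁ _) ≫ pushout.desc _ _ _ = f₀ ≫ f₁
    rw [assoc, pushout.inr_desc, reassoc_of% h₀])
  retract := by
    ext
    change (R₁.i.right ≫ pushout.inl g₁ _) ≫ pushout.desc _ _ _ = 𝟙 A₂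
    rw [assoc, pushout.inl_desc]
    exact R₁.right_retract

lemma IsRetractOf.of_retract_under {A B X : K} {f : A ⟶ B} {g : A ⟶ X}
    (R : Retract (Under.mk f) (Under.mk g)) : IsRetractOf f g :=
  ⟨𝟙 A, R.i.right, 𝟙 A, R.r.right, by simpa using (Under.w R.i).symm,
    by simpa using (Under.w R.r).symm, id_comp _, R.right_retract⟩

/-- if `C` is a cellular class on a cocomplete category, the class of
retracts of morphisms of `C` is closed under composition. -/
theorem retracts_comp {K : Type u} [Category.{v} K] [HasColimits K]
    (C : MorphismProperty K) (hC : IsCellular C)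
    {A₀ A₁ A₂ : K} (f₀ : A₀ ⟶ A₁) (f₁ : A₁ ⟶ A₂)
    (h₀ : retracts C f₀) (h₁ : retracts C f₁) : retracts C (f₀ ≫ f₁) := by
  obtain ⟨_, _, _, hg₀, h₀⟩ := h₀
  obtain ⟨_, _, _, hg₁, h₁⟩ := h₁
  obtain ⟨_, g₀, hCg₀, ⟨R₀⟩⟩ := hC.exists_retract_under hg₀ h₀
  obtain ⟨_, g₁, hCg₁, ⟨R₁⟩⟩ := hC.exists_retract_under hg₁ h₁
  exact ⟨_, _, _, hC.comp hCg₀ (hC.pushout (IsPushout.of_hasPushout g₁ R₀.i.right) hCg₁),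
    IsRetractOf.of_retract_under (R₀.underComp R₁)⟩

end CellularPaper
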